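/- arXiv:1409.7925 — 2 statements merged into one kernel-verified Lean document; each statement's English description precedes it below -/
import Mathlib

section
/- Let C be a precategory (category). For (f, g) ∈ U_C(X) (so f : X ⟶ Y and g : Z ⟶ Y), (f', g') ∈ Ũ_C(X') (so f' : X' ⟶ Z' and g' : Z' ⟶ Y') and u : X' ⟶ X, the square in the category of presheaves of sets on C with top arrow ṽ(f', g') : Yo(X') ⟶ Ũ_C, left arrow Yo(u) : Yo(X') ⟶ Yo(X), right arrow p_C : Ũ_C ⟶ U_C and bottom arrow v(f, g) : Yo(X) ⟶ U_C commutes if and only if g' = g (in particular Z' = Z, Y' = Y) and the square in C with top arrow f' : X' ⟶ Z, left arrow u : X' ⟶ X, right arrow g : Z ⟶ Y and bottom arrow f : X ⟶ Y commutes. -/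
open CategoryTheory Limits Opposite

universe u

variable (C : Type u) [SmallCategory C]

/-- The presheaf `U_C` with `U_C(X) = {(f, g) : f : X ⟶ Y, g : Z ⟶ Y}`,
encoded as `⟨Y, Z, f, g⟩`, with restriction `(f, g) ↦ (a ≫ f, g)`. -/
def UPsh : Cᵒᵖ ⥤ Type u where
  obj X := Σ (Y : C) (Z : C), (unop X ⟶ Y) × (Z ⟶ Y)
  map a := TypeCat.ofHom fun s => ⟨s.1, s.2.1, a.unop ≫ s.2.2.1, s.2.2.2⟩
  map_id := by intro X; apply ConcreteCategory.hom_ext; intro s; simp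
  map_comp := by intro X Y Z a b; apply ConcreteCategory.hom_ext; intro s; simp

/-- The presheaf `Ũ_C` with `Ũ_C(X) = {(f', g) : f' : X ⟶ Z, g : Z ⟶ Y}`,
encoded as `⟨Z, Y, f', g⟩`, with restriction `(f', g) ↦ (a ≫ f', g)`. -/
def UtildePsh : Cᵒᵖ ⥤ Type u where
  obj X := Σ (Z : C) (Y : C), (unop X ⟶ Z) × (Z ⟶ Y)
  map a := TypeCat.ofHom fun s => ⟨s.1, s.2.1, a.unop ≫ s.2.2.1, s.2.2.2⟩
  map_id := by intro X; apply ConcreteCategory.hom_ext; intro s; simp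
  map_comp := by intro X Y Z a b; apply ConcreteCategory.hom_ext; intro s; simp

/-- The morphism of presheaves `p_C : Ũ_C ⟶ U_C`, `(f', g) ↦ (f' ≫ g, g)`. -/
def pPsh : UtildePsh C ⟶ UPsh C where
  app X := TypeCat.ofHom fun s => ⟨s.2.1, s.1, s.2.2.1 ≫ s.2.2.2, s.2.2.2⟩
  naturality := by intro X Y a; apply ConcreteCategory.hom_ext; intro s; exact Sigma.ext rfl (heq_of_eq (Sigma.ext rfl (heq_of_eq (Prod.ext (Category.assoc _ _ _) rfl))))

/-! By the Yoneda lemma the square commutes iff `p_C(f', g') = u^*(f, g)` in `U_C(X')`, that is,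
iff `(f' ≫ g', g') = (u ≫ f, g)`; comparing the components of these dependent tuples gives
`Z' = Z`, `Y' = Y`, `g' = g` and `f' ≫ g = u ≫ f`. -/

theorem yonedaEquiv_symm_comp_eq_map_comp_iff {D : Type*} [Category D] {X X' : D}
    {F G : Dᵒᵖ ⥤ Type _} (α : F ⟶ G) (x : F.obj (op X')) (y : G.obj (op X)) (u : X' ⟶ X) :
    yonedaEquiv.symm x ≫ α = yoneda.map u ≫ yonedaEquiv.symm y ↔ α.app _ x = G.map u.op y := by
  rw [yonedaEquiv_symm_naturality_right, yonedaEquiv_symm_naturality_left,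
    yonedaEquiv.symm.apply_eq_iff_eq]

namespace UPsh

variable {C}

theorem mk_eq_mk_iff {X Y Z Y' Z' : C} (a : X ⟶ Y) (g : Z ⟶ Y) (a' : X ⟶ Y') (g' : Z' ⟶ Y') :
    (⟨Y', Z', a', g'⟩ : (UPsh C).obj (op X)) = ⟨Y, Z, a, g⟩ ↔
      ∃ (_hZ : Z' = Z) (_hY : Y' = Y), HEq g' g ∧ HEq a' a := by
  constructor
  · rintro ⟨⟩
    exact ⟨rfl, rfl, .rfl, .rfl⟩
  · rintro ⟨rfl, rfl, ⟨⟩, ⟨⟩⟩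
    rfl

end UPsh

/-- Lemma 2015.07.25.l1 (commutativity part): for `(f, g) ∈ U_C(X)`,
`(f', g') ∈ Ũ_C(X')` and `u : X' ⟶ X`, the square in presheaves with top
`ṽ(f', g')`, left `Yo(u)`, right `p_C` and bottom `v(f, g)` commutes iff
`g' = g` (in particular `Z' = Z`, `Y' = Y`) and the square in `C` with top `f'`,
left `u`, right `g`, bottom `f` commutes. -/
theorem uPsh_square_commutes_iff {C : Type u} [SmallCategory C]
    {X X' Y Z Y' Z' : C} (f : X ⟶ Y) (g : Z ⟶ Y) (f' : X' ⟶ Z') (g' : Z' ⟶ Y')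
    (u : X' ⟶ X) :
    (yonedaEquiv.symm (⟨Z', Y', f', g'⟩ : (UtildePsh C).obj (op X')) ≫ pPsh C =
        yoneda.map u ≫ yonedaEquiv.symm (⟨Y, Z, f, g⟩ : (UPsh C).obj (op X))) ↔
      ∃ (hZ : Z' = Z) (_hY : Y' = Y), HEq g' g ∧ u ≫ f = (f' ≫ eqToHom hZ) ≫ g := by
  refine (yonedaEquiv_symm_comp_eq_map_comp_iff _ _ _ _).trans ?_
  change (⟨Y', Z', f' ≫ g', g'⟩ : (UPsh C).obj (op X')) = ⟨Y, Z, u ≫ f, g⟩ ↔ _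
  rw [UPsh.mk_eq_mk_iff]
  constructor
  · rintro ⟨rfl, rfl, ⟨⟩, hsq⟩
    exact ⟨rfl, rfl, .rfl, by simpa using (eq_of_heq hsq).symm⟩
  · rintro ⟨rfl, rfl, ⟨⟩, hsq⟩
    exact ⟨rfl, rfl, .rfl, heq_of_eq (by simpa using hsq.symm)⟩
end

section
/- Let CC be a C-system, Δ an object with l(Δ) > 0, Γ = ft(Δ), and Γ' any object of CC. Then the map sending a morphism g : Γ' ⟶ Δ to the pair (g ≫ p_Δ, s_g) is a bijection from Hom(Γ', Δ) onto the set of pairs (f, s) where f : Γ' ⟶ Γ is a morphism and s is a section with ft(∂(s)) = Γ' such that ∂(s) = f*(Δ). -/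
open CategoryTheory Limits

universe v u

/-- A C-system (contextual category): a category with a length function `l`,
father function `ft`, a final object `pt` which is the unique object of length `0`,
canonical projections `proj X : X ⟶ ft X` (with `proj pt` the identity), and for
every `X` with `0 < l X` and `f : Y ⟶ ft X` a canonical pullback `star hX f = f*(X)`
with `q hX f = q(f, X) : f*(X) ⟶ X`, satisfying the C0-system axioms and such that
all canonical squares are pullback squares. -/
class CSystem (C : Type u) [Category.{v} C] where
  l : C → ℕ
  ft : C → C
  pt : C
  l_pt : l pt = 0
  eq_pt : ∀ X : C, l X = 0 → X = pt
  isTerminal_pt : IsTerminal pt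
  ft_pt : ft pt = pt
  l_ft : ∀ X : C, 0 < l X → l (ft X) = l X - 1
  proj : ∀ X : C, X ⟶ ft X
  proj_pt : proj pt = eqToHom ft_pt.symm
  star : ∀ {X Y : C}, 0 < l X → (Y ⟶ ft X) → C
  q : ∀ {X Y : C} (hX : 0 < l X) (f : Y ⟶ ft X), star hX f ⟶ X
  l_star : ∀ {X Y : C} (hX : 0 < l X) (f : Y ⟶ ft X), l (star hX f) = l Y + 1
  ft_star : ∀ {X Y : C} (hX : 0 < l X) (f : Y ⟶ ft X), ft (star hX f) = Y
  proj_q : ∀ {X Y : C} (hX : 0 < l X) (f : Y ⟶ ft X),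
    proj (star hX f) ≫ eqToHom (ft_star hX f) ≫ f = q hX f ≫ proj X
  star_id : ∀ {X : C} (hX : 0 < l X), star hX (𝟙 (ft X)) = X
  q_id : ∀ {X : C} (hX : 0 < l X), q hX (𝟙 (ft X)) = eqToHom (star_id hX)
  star_comp : ∀ {X Y Y' : C} (hX : 0 < l X) (f : Y ⟶ ft X) (g : Y' ⟶ Y),
    star hX (g ≫ f) =
      star (Nat.lt_of_lt_of_eq (Nat.succ_pos (l Y)) (l_star hX f).symm)
        (g ≫ eqToHom (ft_star hX f).symm)
  q_comp : ∀ {X Y Y' : C} (hX : 0 < l X) (f : Y ⟶ ft X) (g : Y' ⟶ Y),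
    q hX (g ≫ f) =
      eqToHom (star_comp hX f g) ≫
        q (Nat.lt_of_lt_of_eq (Nat.succ_pos (l Y)) (l_star hX f).symm)
          (g ≫ eqToHom (ft_star hX f).symm) ≫ q hX f
  isPullback_q : ∀ {X Y : C} (hX : 0 < l X) (f : Y ⟶ ft X),
    IsPullback (q hX f) (proj (star hX f) ≫ eqToHom (ft_star hX f)) (proj X) f

namespace CSystem

variable {C : Type u} [Category.{v} C] [CSystem C]

/-- The section `s_f : X ⟶ (f ≫ p_Y)*(Y)` associated to `f : X ⟶ Y` with `0 < l Y`:
the unique morphism with `s_f ≫ p_{(f ≫ p_Y)*(Y)} = 𝟙 X` and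
`s_f ≫ q(f ≫ p_Y, Y) = f`. -/
noncomputable def sMor {X Y : C} (hY : 0 < l Y) (f : X ⟶ Y) :
    X ⟶ star hY (f ≫ proj Y) :=
  (isPullback_q hY (f ≫ proj Y)).lift f (𝟙 X) (by simp)

end CSystem
open CategoryTheory Limits CSystem

variable {C : Type u} [Category.{v} C] [CSystem C]

/-- A section over `Γ`: a morphism `s : Γ ⟶ X` where `ft X = Γ`, `0 < l X`, and
`s ≫ p_X = 𝟙` (written via `eqToHom` along `ft X = Γ`). `∂(s)` is the field `ob`. -/
structure Sect (Γ : C) where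
  ob : C
  pos : 0 < l ob
  ft_ob : ft ob = Γ
  s : Γ ⟶ ob
  isSect : s ≫ proj ob = eqToHom ft_ob.symm

/-- The pulled-back section `f*(s)`: the unique morphism `t : Γ' ⟶ f*(∂(s))` with
`t ≫ p_{f*(∂(s))} = 𝟙_{Γ'}` and `t ≫ q(f, ∂(s)) = f ≫ s`. -/
noncomputable def Sect.pull {Γ Γ' : C} (σ : Sect Γ) (f : Γ' ⟶ Γ) : Sect Γ' :=
  { ob := star σ.pos (f ≫ eqToHom σ.ft_ob.symm)
    pos := Nat.lt_of_lt_of_eq (Nat.succ_pos _) (l_star σ.pos _).symm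
    ft_ob := ft_star σ.pos _
    s := (isPullback_q σ.pos (f ≫ eqToHom σ.ft_ob.symm)).lift (f ≫ σ.s) (𝟙 Γ')
      (by rw [Category.assoc, σ.isSect]; simp)
    isSect := by
      rw [← cancel_mono (eqToHom (ft_star σ.pos (f ≫ eqToHom σ.ft_ob.symm))), Category.assoc]
      simpa using
        (isPullback_q σ.pos (f ≫ eqToHom σ.ft_ob.symm)).lift_snd (f ≫ σ.s) (𝟙 Γ')
          (by rw [Category.assoc, σ.isSect]; simp) }

/-- The section `s_f` of `p_{(f ≫ p_Y)*(Y)}` associated to `f : X ⟶ Y`, as an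
element of `Sect X`; its underlying morphism is `sMor`. -/
noncomputable def sectOf {X Y : C} (hY : 0 < l Y) (f : X ⟶ Y) : Sect X :=
  { ob := star hY (f ≫ proj Y)
    pos := Nat.lt_of_lt_of_eq (Nat.succ_pos _) (l_star hY _).symm
    ft_ob := ft_star hY _
    s := sMor hY f
    isSect := by
      rw [← cancel_mono (eqToHom (ft_star hY (f ≫ proj Y))), Category.assoc]
      simpa [sMor] using
        (isPullback_q hY (f ≫ proj Y)).lift_snd f (𝟙 X) (by simp) }

/-- The key step of Lemma 2009.12.28.l1: for `Δ` with `0 < l Δ`, `Γ = ft Δ` and any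
`Γ'`, the map `g ↦ (g ≫ p_Δ, s_g)` is a bijection from `Hom(Γ', Δ)` onto the set of
pairs `(f, s)` of a morphism `f : Γ' ⟶ Γ` and a section `s` with `ft(∂(s)) = Γ'`
such that `∂(s) = f*(Δ)`. -/
theorem hom_bijective_pairs {C : Type u} [Category.{v} C] [CSystem C]
    {Δ : C} (hΔ : 0 < l Δ) (Γ' : C) :
    Function.Bijective
      (fun g : Γ' ⟶ Δ =>
        (⟨(g ≫ proj Δ, sectOf hΔ g), rfl⟩ :
          {p : (Γ' ⟶ ft Δ) × Sect Γ' // p.2.ob = star hΔ p.1})) := by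
  rw [Function.bijective_iff_has_inverse]
  refine ⟨fun p => p.1.2.s ≫ eqToHom p.2 ≫ q hΔ p.1.1, ?_, ?_⟩
  · intro g
    simpa [sectOf, sMor] using (isPullback_q hΔ (g ≫ proj Δ)).lift_fst g (𝟙 Γ') (by simp)
  · rintro ⟨⟨f, ⟨ob, pos, ftob, s, isSect⟩⟩, h⟩
    dsimp only at h ⊢
    subst h
    rw [eqToHom_refl, Category.id_comp]
    generalize hg : s ≫ q hΔ f = g
    have hA : g ≫ proj Δ = f := by
      rw [← hg, Category.assoc, ← proj_q hΔ f, ← Category.assoc, isSect]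
      simp
    subst hA
    have hs : sMor hΔ g = s := by
      apply (isPullback_q hΔ (g ≫ proj Δ)).hom_ext
      · rw [hg]
        exact (isPullback_q hΔ (g ≫ proj Δ)).lift_fst g (𝟙 Γ') (by simp)
      · rw [← Category.assoc s, isSect, eqToHom_trans, eqToHom_refl]
        simpa [sMor] using
          (isPullback_q hΔ (g ≫ proj Δ)).lift_snd g (𝟙 Γ') (by simp)
    apply Subtype.ext
    dsimp only
    refine Prod.ext rfl ?_
    show sectOf hΔ g = _
    unfold sectOf
    congr 1
end
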